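/- Let H_• be a subproduct system with dim H = n, and let S_1, …, S_n be the shift operators on Fock space H_ℕ = ⊕_m H_m defined by S_k φ = p_{m+1}(e_k ⊗ φ) for φ ∈ H_m. Then for all m ≤ l, the restriction to H_l satisfies Σ_{|r|=m} S_r S_r* |_{H_l} = p_l, where the sum is over words r of length m in {1,…,n} and S_r = S_{r_1}⋯S_{r_m}. -/

import Mathlib

open scoped Matrix

noncomputable section

/-- Words of length `m` in the alphabet `{1,…,n}`. -/
abbrev Wd (n m : ℕ) := Fin m → Fin n

/-- The `m`-th full tensor power `H^{⊗m}` of `H = ℂ^n`, realized as the Euclidean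
space with orthonormal basis indexed by words of length `m`. -/
abbrev TP (n m : ℕ) : Type := EuclideanSpace ℂ (Wd n m)

variable {n : ℕ}

/-- Continuous linear map associated to a (possibly rectangular) matrix. -/
def ofMatR {ι κ : Type} [Fintype ι] [Fintype κ] [DecidableEq ι] [DecidableEq κ]
    (M : Matrix ι κ ℂ) : EuclideanSpace ℂ κ →L[ℂ] EuclideanSpace ℂ ι :=
  LinearMap.toContinuousLinearMap (Matrix.toEuclideanLin M)

/-- Matrix entry of an operator in the standard basis. -/
def ent {a : ℕ} (A : TP n a →L[ℂ] TP n a) (w v : Wd n a) : ℂ :=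
  A (EuclideanSpace.single v 1) w

def wfst {m k : ℕ} (w : Wd n (m + k)) : Wd n m := fun i => w (Fin.castAdd k i)
def wsnd {m k : ℕ} (w : Wd n (m + k)) : Wd n k := fun i => w (Fin.natAdd m i)

/-- Tensor product of vectors, under the identification `H^{⊗m} ⊗ H^{⊗k} = H^{⊗(m+k)}`. -/
def tmul {m k : ℕ} (x : TP n m) (y : TP n k) : TP n (m + k) :=
  (WithLp.equiv 2 _).symm (fun w => x (wfst w) * y (wsnd w))

/-- Tensor product of subspaces `K ⊗ L ⊆ H^{⊗(m+k)}`. -/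
def tensorSub {m k : ℕ} (K : Submodule ℂ (TP n m)) (L : Submodule ℂ (TP n k)) :
    Submodule ℂ (TP n (m + k)) :=
  Submodule.span ℂ {z | ∃ x ∈ K, ∃ y ∈ L, z = tmul x y}

/-- Tensor product of operators, under `H^{⊗m} ⊗ H^{⊗k} = H^{⊗(m+k)}`. -/
def opT {m k : ℕ} (A : TP n m →L[ℂ] TP n m) (B : TP n k →L[ℂ] TP n k) :
    TP n (m + k) →L[ℂ] TP n (m + k) :=
  ofMatR (Matrix.of fun w v => ent A (wfst w) (wfst v) * ent B (wsnd w) (wsnd v))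

/-- A subproduct system: `H_0 = ℂ` and `H_{m+k} ⊆ H_m ⊗ H_k`. -/
def IsSubproduct (H : ∀ m, Submodule ℂ (TP n m)) : Prop :=
  H 0 = ⊤ ∧ ∀ m k, H (m + k) ≤ tensorSub (H m) (H k)

/-- The orthogonal projection `p_m : H^{⊗m} → H_m` (as an operator on `H^{⊗m}`). -/
def prj (H : ∀ m, Submodule ℂ (TP n m)) (m : ℕ) : TP n m →L[ℂ] TP n m :=
  (H m).subtypeL ∘L Submodule.orthogonalProjection (H m)

/-- Left creation operator `x ↦ e_j ⊗ x`. -/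
def lcreate (j : Fin n) (m : ℕ) : TP n m →L[ℂ] TP n (m + 1) :=
  ofMatR (Matrix.of fun (w : Wd n (m + 1)) (v : Wd n m) =>
    if w 0 = j ∧ (fun i : Fin m => w i.succ) = v then 1 else 0)

/-- Right creation operator `x ↦ x ⊗ e_j`. -/
def rcreate (j : Fin n) (m : ℕ) : TP n m →L[ℂ] TP n (m + 1) :=
  ofMatR (Matrix.of fun (w : Wd n (m + 1)) (v : Wd n m) =>
    if w (Fin.last m) = j ∧ (fun i : Fin m => w i.castSucc) = v then 1 else 0)

/-- Graded component of the left shift `S_j : H_m → H_{m+1}`, `φ ↦ p_{m+1}(e_j ⊗ φ)`. -/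
def lsh (H : ∀ m, Submodule ℂ (TP n m)) (j : Fin n) (m : ℕ) : TP n m →L[ℂ] TP n (m + 1) :=
  prj H (m + 1) ∘L lcreate j m ∘L prj H m

/-- Graded component of the right shift `R_j : H_m → H_{m+1}`, `φ ↦ p_{m+1}(φ ⊗ e_j)`. -/
def rsh (H : ∀ m, Submodule ℂ (TP n m)) (j : Fin n) (m : ℕ) : TP n m →L[ℂ] TP n (m + 1) :=
  prj H (m + 1) ∘L rcreate j m ∘L prj H m

/-- Iterated left shift `S_r = S_{r_1} ⋯ S_{r_d}` as a map `H_m → H_{m+d}`. -/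
def lshW (H : ∀ m, Submodule ℂ (TP n m)) (m : ℕ) :
    ∀ d, Wd n d → (TP n m →L[ℂ] TP n (m + d))
  | 0, _ => ContinuousLinearMap.id ℂ _
  | d + 1, r => lsh H (r 0) (m + d) ∘L lshW H m d (Fin.tail r)

/-- Iterated right shift `R_r = R_{r_1} ⋯ R_{r_d}` as a map `H_m → H_{m+d}`. -/
def rshW (H : ∀ m, Submodule ℂ (TP n m)) (m : ℕ) :
    ∀ d, Wd n d → (TP n m →L[ℂ] TP n (m + d))
  | 0, _ => ContinuousLinearMap.id ℂ _
  | d + 1, r => rsh H (r (Fin.last d)) (m + d) ∘L rshW H m d (Fin.init r)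

/-- Canonical unitary identification `H^{⊗a} = H^{⊗b}` for `a = b`. -/
def castTP {a b : ℕ} (h : a = b) : TP n a →L[ℂ] TP n b :=
  ofMatR (Matrix.of fun (w : Wd n b) (v : Wd n a) =>
    if (fun i => w (Fin.cast h i)) = v then 1 else 0)

/-- `S_s : H_m → H_l` for a word `s` of length `l - m`. -/
def lshWTo (H : ∀ m, Submodule ℂ (TP n m)) (m l : ℕ) (h : m ≤ l) (s : Wd n (l - m)) :
    TP n m →L[ℂ] TP n l :=
  castTP (by omega : m + (l - m) = l) ∘L lshW H m (l - m) s

/-- `R_r : H_m → H_l` for a word `r` of length `l - m`. -/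
def rshWTo (H : ∀ m, Submodule ℂ (TP n m)) (m l : ℕ) (h : m ≤ l) (r : Wd n (l - m)) :
    TP n m →L[ℂ] TP n l :=
  castTP (by omega : m + (l - m) = l) ∘L rshW H m (l - m) r

/-- Extension of an operator on `H_m` by zero to `H^{⊗m}`. -/
def extOp (H : ∀ m, Submodule ℂ (TP n m)) {m : ℕ} (A : ↥(H m) →L[ℂ] ↥(H m)) :
    TP n m →L[ℂ] TP n m :=
  (H m).subtypeL ∘L A ∘L Submodule.orthogonalProjection (H m)

/-- Compression of an operator on `H^{⊗m}` to `H_m`. -/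
def cmpOp (H : ∀ m, Submodule ℂ (TP n m)) {m : ℕ} (T : TP n m →L[ℂ] TP n m) :
    ↥(H m) →L[ℂ] ↥(H m) :=
  Submodule.orthogonalProjection (H m) ∘L T ∘L (H m).subtypeL

def tk {m l : ℕ} (h : m ≤ l) (w : Wd n l) : Wd n m := fun i => w (Fin.castLE h i)
def dr (m : ℕ) {l : ℕ} (w : Wd n l) : Wd n (l - m) :=
  fun i => w ⟨m + i.1, by have := i.isLt; omega⟩

/-- `A ⊗ B` on `H^{⊗l} = H^{⊗m} ⊗ H^{⊗(l-m)}`. -/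
def opTG {m l : ℕ} (h : m ≤ l) (A : TP n m →L[ℂ] TP n m)
    (B : TP n (l - m) →L[ℂ] TP n (l - m)) : TP n l →L[ℂ] TP n l :=
  ofMatR (Matrix.of fun w v => ent A (tk h w) (tk h v) * ent B (dr m w) (dr m v))

/-- The inductive-system map `ι_{m,l}(A) = p_l (A ⊗ 1) p_l : B(H_m) → B(H_l)`. -/
def iota (H : ∀ m, Submodule ℂ (TP n m)) {m l : ℕ} (h : m ≤ l)
    (A : ↥(H m) →L[ℂ] ↥(H m)) : ↥(H l) →L[ℂ] ↥(H l) :=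
  cmpOp H (opTG h (extOp H A) (ContinuousLinearMap.id ℂ (TP n (l - m))))

/-- The chirality-flipped inductive map `ῑ_{m,l}(A) = Σ_{|s|=l-m} S_s A S_s^* |_{H_l}`. -/
def iotabar (H : ∀ m, Submodule ℂ (TP n m)) {m l : ℕ} (h : m ≤ l)
    (A : ↥(H m) →L[ℂ] ↥(H m)) : ↥(H l) →L[ℂ] ↥(H l) :=
  cmpOp H (∑ s : Wd n (l - m),
    lshWTo H m l h s ∘L extOp H A ∘L ContinuousLinearMap.adjoint (lshWTo H m l h s))

/-- The word `j` of length one. -/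
def letter (j : Fin n) : Wd n 1 := fun _ => j

/-- `Q^{⊗m}` on `H^{⊗m}`. -/
def tpow (Q : TP n 1 →L[ℂ] TP n 1) (m : ℕ) : TP n m →L[ℂ] TP n m :=
  ofMatR (Matrix.of fun w v => ∏ i : Fin m, ent Q (letter (w i)) (letter (v i)))

/-- Diagonal entry `(Q^{⊗d})_{r,r}`. -/
def Qdg (Q : TP n 1 →L[ℂ] TP n 1) {d : ℕ} (r : Wd n d) : ℂ :=
  ∏ i, ent Q (letter (r i)) (letter (r i))

/-- Trace of an operator. -/
def trOp {E : Type*} [NormedAddCommGroup E] [Module ℂ E] (A : E →L[ℂ] E) : ℂ :=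
  LinearMap.trace ℂ E A.toLinearMap

/-- `Tr(Q_m)` where `Q_m = p_m Q^{⊗m} p_m ∈ B(H_m)`. -/
def trQ (H : ∀ m, Submodule ℂ (TP n m)) (Q : TP n 1 →L[ℂ] TP n 1) (m : ℕ) : ℂ :=
  trOp (cmpOp H (tpow Q m))

/-- The state `φ_m(A) = Tr(ρ^{(m)} A)`, `ρ^{(m)} = Q_m / Tr(Q_m)`. -/
def phiSt (H : ∀ m, Submodule ℂ (TP n m)) (Q : TP n 1 →L[ℂ] TP n 1) (m : ℕ)
    (A : ↥(H m) →L[ℂ] ↥(H m)) : ℂ :=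
  trOp (cmpOp H (tpow Q m) ∘L A) / trQ H Q m

/-- The projective-system map
`j_{l,m}(A) = (Tr Q_m / Tr Q_l) Σ_{|r|=l-m} (Q^{⊗(l-m)})_{r,r} R_r^* A R_r |_{H_m}`. -/
def jmap (H : ∀ m, Submodule ℂ (TP n m)) (Q : TP n 1 →L[ℂ] TP n 1) {m l : ℕ} (h : m ≤ l)
    (A : ↥(H l) →L[ℂ] ↥(H l)) : ↥(H m) →L[ℂ] ↥(H m) :=
  (trQ H Q m / trQ H Q l) • cmpOp H (∑ r : Wd n (l - m),
    Qdg Q r • (ContinuousLinearMap.adjoint (rshWTo H m l h r) ∘L extOp H A ∘L rshWTo H m l h r))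

/-- `ρ^{(m)} = Q_m / Tr(Q_m)`, extended by zero to `H^{⊗m}`. -/
def rhoExt (H : ∀ m, Submodule ℂ (TP n m)) (Q : TP n 1 →L[ℂ] TP n 1) (m : ℕ) :
    TP n m →L[ℂ] TP n m :=
  (trQ H Q m)⁻¹ • (prj H m ∘L tpow Q m ∘L prj H m)

/-- The normalization constant `√(Tr(Q_m)Tr(Q_k)/Tr(Q_{m+k}))`. -/
def lamC (H : ∀ m, Submodule ℂ (TP n m)) (Q : TP n 1 →L[ℂ] TP n 1) (m k : ℕ) : ℂ :=
  (trQ H Q m * trQ H Q k / trQ H Q (m + k)) ^ ((1 : ℂ) / 2)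

/-- Right tensoring `x ↦ x ⊗ y` as a continuous linear map. -/
def tensR {m k : ℕ} (y : TP n k) : TP n m →L[ℂ] TP n (m + k) :=
  ofMatR (Matrix.of fun w v => if wfst w = v then y (wsnd w) else 0)

/-- The map `V_{m,l} ψ = √(TrQ_m TrQ_{l-m}/TrQ_l) Σ_{|r|=l-m} p_l (R_r^* ψ ⊗ e_r)`,
realized as an operator on `H^{⊗(m+k)}` (with `l = m + k`). -/
def Vml (H : ∀ m, Submodule ℂ (TP n m)) (Q : TP n 1 →L[ℂ] TP n 1) (m k : ℕ) :
    TP n (m + k) →L[ℂ] TP n (m + k) :=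
  lamC H Q m k • ∑ r : Wd n k,
    prj H (m + k) ∘L tensR (EuclideanSpace.single r 1) ∘L
      ContinuousLinearMap.adjoint (rshW H m k r)

/-- The claimed adjoint `V_{m,l}^* = √(⋯) (ρ^{(l)})^{-1}(ρ^{(m)} ⊗ ρ^{(l-m)})`. -/
def VmlStar (H : ∀ m, Submodule ℂ (TP n m)) (Q : TP n 1 →L[ℂ] TP n 1) (m k : ℕ) :
    TP n (m + k) →L[ℂ] TP n (m + k) :=
  lamC H Q m k •
    (extOp H (trQ H Q (m + k) • Ring.inverse (cmpOp H (tpow Q (m + k)))) ∘L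
      opT (rhoExt H Q m) (rhoExt H Q k))

/-- The adjoint, with instances supplied explicitly. -/
def adjC {E F : Type*} [NormedAddCommGroup E] [NormedAddCommGroup F]
    [InnerProductSpace ℂ E] [InnerProductSpace ℂ F] [CompleteSpace E] [CompleteSpace F]
    (T : E →L[ℂ] F) : F →L[ℂ] E :=
  @ContinuousLinearMap.adjoint ℂ E F _ _ _ _ _ _ _ T

/-- Complete positivity of a map between operator algebras on Hilbert spaces:
positive matrices over the domain are sent to positive matrices over the codomain.
(Here `Nᴴ` is written as the transpose of the entrywise adjoint.) -/
def IsCP {E F' : Type*} [NormedAddCommGroup E] [InnerProductSpace ℂ E] [CompleteSpace E]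
    [NormedAddCommGroup F'] [InnerProductSpace ℂ F'] [CompleteSpace F']
    (Φ : (E →L[ℂ] E) → (F' →L[ℂ] F')) : Prop :=
  ∀ (d : ℕ) (M : Matrix (Fin d) (Fin d) (E →L[ℂ] E)),
    (∃ N : Matrix (Fin d) (Fin d) (E →L[ℂ] E), M = (N.map fun T => adjC T)ᵀ * N) →
    ∃ N' : Matrix (Fin d) (Fin d) (F' →L[ℂ] F'), M.map Φ = (N'.map fun T => adjC T)ᵀ * N'

/-- The vacuum vector `Ω ∈ H^{⊗0} = ℂ`. -/
def vac (n : ℕ) : TP n 0 := EuclideanSpace.single default 1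

/-- The symmetric subspace `H^{∨m} ⊆ H^{⊗m}`. -/
def symSub (n m : ℕ) : Submodule ℂ (TP n m) where
  carrier := {x | ∀ (σ : Equiv.Perm (Fin m)) (w : Wd n m), x (w ∘ σ) = x w}
  add_mem' := by
    intro a b ha hb σ w
    show (a + b) (w ∘ σ) = (a + b) w
    simp only [PiLp.add_apply, ha σ w, hb σ w]
  zero_mem' := by
    intro σ w
    show (0 : TP n m) (w ∘ σ) = (0 : TP n m) w
    simp
  smul_mem' := by
    intro c x hx σ w
    show (c • x) (w ∘ σ) = (c • x) w
    simp only [PiLp.smul_apply, hx σ w]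

/-- Rank-one operator `|x⟩⟨x|`. -/
def rankOne {F : Type*} [NormedAddCommGroup F] [InnerProductSpace ℂ F] (x : F) :
    F →L[ℂ] F :=
  (innerSL ℂ x).smulRight x

end

/-
The partial adjoint `S_j^*` of the shift is the restriction to `H_{a+1}` of the full-Fock-space
annihilator `L_j^* ψ = ψ(j, ·)`: indeed `H_{1+a} ⊆ H_1 ⊗ H_a`, and slicing an element of a tensor
product of subspaces in its first factor stays in the second factor, so `L_j^* ψ ∈ H_a` already.
Hence `Σ_j S_j S_j^* ψ = p_{a+1} Σ_j L_j L_j^* ψ = p_{a+1} ψ = ψ`, and the statement for words of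
length `m` follows by induction on `m`, peeling off the first letter.
-/

noncomputable section

variable {n : ℕ}

lemma ofMatR_apply {ι κ : Type} [Fintype ι] [Fintype κ] [DecidableEq ι] [DecidableEq κ]
    (M : Matrix ι κ ℂ) (x : EuclideanSpace ℂ κ) (w : ι) :
    ofMatR M x w = ∑ v, M w v * x v := by
  simp [ofMatR, Matrix.toLpLin_apply, Matrix.mulVec, dotProduct]

lemma adjoint_ofMatR {ι κ : Type} [Fintype ι] [Fintype κ] [DecidableEq ι] [DecidableEq κ]
    (M : Matrix ι κ ℂ) : ContinuousLinearMap.adjoint (ofMatR M) = ofMatR Mᴴ := by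
  rw [ofMatR, ofMatR, ← LinearMap.adjoint_toContinuousLinearMap,
    ← Matrix.toEuclideanLin_conjTranspose_eq_adjoint]

section Slice

variable {m k : ℕ}

def sliceFst (u : Wd n m) : TP n (m + k) →ₗ[ℂ] TP n k :=
  (WithLp.linearEquiv 2 ℂ (Wd n k → ℂ)).symm.toLinearMap ∘ₗ
    LinearMap.funLeft ℂ ℂ (Fin.append u) ∘ₗ
      (WithLp.linearEquiv 2 ℂ (Wd n (m + k) → ℂ)).toLinearMap

lemma sliceFst_apply (u : Wd n m) (z : TP n (m + k)) (v : Wd n k) :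
    sliceFst u z v = z (Fin.append u v) := rfl

lemma sliceFst_tmul (u : Wd n m) (x : TP n m) (y : TP n k) :
    sliceFst u (tmul x y) = x u • y := by
  ext v
  have hfst : wfst (Fin.append u v) = u := funext (Fin.append_left u v)
  have hsnd : wsnd (Fin.append u v) = v := funext (Fin.append_right u v)
  simp [sliceFst_apply, tmul, hfst, hsnd]

lemma sliceFst_mem_of_mem_tensorSub {K : Submodule ℂ (TP n m)} {L : Submodule ℂ (TP n k)}
    {z : TP n (m + k)} (hz : z ∈ tensorSub K L) (u : Wd n m) : sliceFst u z ∈ L := by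
  suffices tensorSub K L ≤ L.comap (sliceFst u) from this hz
  rw [tensorSub, Submodule.span_le]
  rintro _ ⟨x, -, y, hy, rfl⟩
  simpa [sliceFst_tmul] using L.smul_mem (x u) hy

end Slice

variable {H : ∀ m, Submodule ℂ (TP n m)}

lemma prj_eq_self {m : ℕ} {x : TP n m} (hx : x ∈ H m) : prj H m x = x :=
  Submodule.starProjection_eq_self_iff.mpr hx

lemma adjoint_prj (H : ∀ m, Submodule ℂ (TP n m)) (m : ℕ) :
    ContinuousLinearMap.adjoint (prj H m) = prj H m :=
  (isSelfAdjoint_starProjection (H m)).adjoint_eq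

lemma lcreate_apply {a : ℕ} (j : Fin n) (x : TP n a) (w : Wd n (a + 1)) :
    lcreate j a x w = if w 0 = j then x (Fin.tail w) else 0 := by
  rw [lcreate, ofMatR_apply]
  split_ifs with h <;> simp [h]
  rfl

lemma adjoint_lcreate_apply {a : ℕ} (j : Fin n) (ψ : TP n (a + 1)) (v : Wd n a) :
    ContinuousLinearMap.adjoint (lcreate j a) ψ v = ψ (Fin.cons j v) := by
  have hcond : ∀ w : Wd n (a + 1), (w 0 = j ∧ (fun i : Fin a => w i.succ) = v) ↔
      w = Fin.cons j v := fun w => by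
    rw [← Fin.cons_self_tail w, Fin.cons_inj]
    simp only [Fin.cons_zero, Fin.cons_succ]
  simp [lcreate, adjoint_ofMatR, ofMatR_apply, Matrix.conjTranspose_apply, hcond]

lemma sum_lcreate_adjoint_lcreate {a : ℕ} (ψ : TP n (a + 1)) :
    ∑ j : Fin n, lcreate j a (ContinuousLinearMap.adjoint (lcreate j a) ψ) = ψ := by
  ext w
  simp [WithLp.ofLp_sum, lcreate_apply, adjoint_lcreate_apply]

lemma adjoint_lcreate_mem (hsp : IsSubproduct H) {a : ℕ} {ψ : TP n (a + 1)}
    (hψ : ψ ∈ H (a + 1)) (j : Fin n) : ContinuousLinearMap.adjoint (lcreate j a) ψ ∈ H a := by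
  -- the inclusion `H (1 + a) ≤ H 1 ⊗ H a` lives on `TP n (1 + a)`, not `TP n (a + 1)`
  have key : ∀ b (e : b = 1 + a) (φ : TP n b), φ ∈ H b → ∀ u : Wd n 1,
      WithLp.toLp 2 (fun v => φ (Fin.append u v ∘ Fin.cast e)) ∈ H a := by
    rintro b rfl φ hφ u
    exact sliceFst_mem_of_mem_tensorSub (hsp.2 1 a hφ) u
  convert key (a + 1) (Nat.add_comm a 1) ψ hψ (Fin.cons j Fin.elim0) using 1
  ext v
  rw [adjoint_lcreate_apply, PiLp.toLp_apply]
  exact congrArg ψ (Fin.cons_eq_append j v)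

lemma adjoint_lsh (H : ∀ m, Submodule ℂ (TP n m)) (j : Fin n) (a : ℕ) :
    ContinuousLinearMap.adjoint (lsh H j a) =
      prj H a ∘L ContinuousLinearMap.adjoint (lcreate j a) ∘L prj H (a + 1) := by
  simp only [lsh, ContinuousLinearMap.adjoint_comp, adjoint_prj, ContinuousLinearMap.comp_assoc]

lemma adjoint_lsh_mem (H : ∀ m, Submodule ℂ (TP n m)) (j : Fin n) {a : ℕ} (ψ : TP n (a + 1)) :
    ContinuousLinearMap.adjoint (lsh H j a) ψ ∈ H a := by
  rw [adjoint_lsh]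
  exact Submodule.coe_mem _

lemma adjoint_lsh_apply_of_mem (hsp : IsSubproduct H) (j : Fin n) {a : ℕ} {ψ : TP n (a + 1)}
    (hψ : ψ ∈ H (a + 1)) :
    ContinuousLinearMap.adjoint (lsh H j a) ψ = ContinuousLinearMap.adjoint (lcreate j a) ψ := by
  rw [adjoint_lsh, ContinuousLinearMap.comp_apply, ContinuousLinearMap.comp_apply,
    prj_eq_self hψ, prj_eq_self (adjoint_lcreate_mem hsp hψ j)]

lemma sum_lsh_adjoint_lsh (hsp : IsSubproduct H) {a : ℕ} {ψ : TP n (a + 1)}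
    (hψ : ψ ∈ H (a + 1)) :
    ∑ j : Fin n, lsh H j a (ContinuousLinearMap.adjoint (lsh H j a) ψ) = ψ := by
  calc ∑ j : Fin n, lsh H j a (ContinuousLinearMap.adjoint (lsh H j a) ψ)
      = prj H (a + 1)
          (∑ j : Fin n, lcreate j a (ContinuousLinearMap.adjoint (lcreate j a) ψ)) := by
        rw [map_sum]
        refine Finset.sum_congr rfl fun j _ => ?_
        rw [adjoint_lsh_apply_of_mem hsp j hψ, lsh, ContinuousLinearMap.comp_apply,
          ContinuousLinearMap.comp_apply, prj_eq_self (adjoint_lcreate_mem hsp hψ j)]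
    _ = ψ := by rw [sum_lcreate_adjoint_lcreate, prj_eq_self hψ]

lemma lshW_cons (H : ∀ m, Submodule ℂ (TP n m)) (k m : ℕ) (j : Fin n) (s : Wd n m) :
    lshW H k (m + 1) (Fin.cons j s) = lsh H j (k + m) ∘L lshW H k m s := by
  simp only [lshW, Fin.cons_zero, Fin.tail_cons]

end

/-- For a subproduct system, `Σ_{|r|=m} S_r S_r^* |_{H_l} = p_l`
for all `m ≤ l` (written with `l = k + m`). -/
theorem stmt1 {n : ℕ} (H : ∀ m, Submodule ℂ (TP n m)) (hsp : IsSubproduct H)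
    (k m : ℕ) (ψ : TP n (k + m)) (hψ : ψ ∈ H (k + m)) :
    ∑ r : Wd n m, lshW H k m r (ContinuousLinearMap.adjoint (lshW H k m r) ψ) = ψ := by
  induction m with
  | zero => simp [lshW, ContinuousLinearMap.adjoint_id]
  | succ m ih =>
    rw [← (Fin.consEquiv fun _ => Fin n).sum_comp, Fintype.sum_prod_type]
    calc ∑ j : Fin n, ∑ s : Wd n m, lshW H k (m + 1) (Fin.cons j s)
          (ContinuousLinearMap.adjoint (lshW H k (m + 1) (Fin.cons j s)) ψ)
        = ∑ j : Fin n, lsh H j (k + m) (∑ s : Wd n m, lshW H k m s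
            (ContinuousLinearMap.adjoint (lshW H k m s)
              (ContinuousLinearMap.adjoint (lsh H j (k + m)) ψ))) := by
          simp only [lshW_cons, ContinuousLinearMap.adjoint_comp, map_sum,
            ContinuousLinearMap.comp_apply]
      _ = ψ := by
          simp only [ih _ (adjoint_lsh_mem H _ _)]
          exact sum_lsh_adjoint_lsh hsp hψ
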